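/- arXiv:1104.1295 — 3 statements merged into one kernel-verified Lean document; each statement's English description precedes it below -/
import Mathlib

section
/- Let B be a nonempty latin bitrade in Q_k^n. Then |B| = 2^n if and only if the subgraph of the Hamming graph Γ Q_k^n induced by B is isomorphic to the Boolean n-cube graph Γ Q_2^n (the graph on {0,1}^n in which two vertices are adjacent iff they differ in exactly one coordinate). -/
/-!
Slicing a latin bitrade `B ⊆ Q_k^(n+1)` by the value `v` of the first coordinate gives latin
bitrades `layer B v ⊆ Q_k^n`, and the line in direction `0` through a point of `B` meets `B` a
second time, in another layer. Hence a nonempty bitrade has two nonempty layers and, by induction,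
at least `2^n` points. If `|B| = 2^(n+1)`, a third nonempty layer would give at least `3 · 2^n`
points, so exactly two layers are nonempty; the partner of each point of one lies in the other,
so the two layers coincide and have `2^n` points each. By induction `B` is then a box
`∏ i, {a i, b i}` with `a i ≠ b i`, the image of an isometric embedding of `Q_2^n`.
-/

/-- The 1-dimensional face (line) of `Q_k^n` in direction `i` through the point `a`. -/
def line {k n : ℕ} (i : Fin n) (a : Fin n → Fin k) : Set (Fin n → Fin k) :=
  {x | ∀ j, j ≠ i → x j = a j}

/-- `B ⊆ Q_k^n` is a latin bitrade if it meets every 1-dimensional face in 0 or 2 points. -/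
def IsLatinBitrade {k n : ℕ} (B : Set (Fin n → Fin k)) : Prop :=
  ∀ (i : Fin n) (a : Fin n → Fin k),
    (B ∩ line i a).ncard = 0 ∨ (B ∩ line i a).ncard = 2

/-- The Hamming graph `Γ Q_k^n`: vertices are the points of `Q_k^n`, two vertices
are adjacent iff their Hamming distance is 1. -/
def hammingGraph (k n : ℕ) : SimpleGraph (Fin n → Fin k) where
  Adj x y := hammingDist x y = 1
  symm := by
    constructor
    intro x y h
    rwa [hammingDist_comm]
  loopless := by
    constructor
    intro x h
    simp [hammingDist_self] at h

open Set Function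

variable {k n : ℕ}

theorem IsLatinBitrade.exists_ne_mem_line {B : Set (Fin n → Fin k)} (hB : IsLatinBitrade B)
    {x : Fin n → Fin k} (hx : x ∈ B) (i : Fin n) : ∃ y ∈ B, y ≠ x ∧ y ∈ line i x := by
  have hxl : x ∈ B ∩ line i x := ⟨hx, fun _ _ => rfl⟩
  have hcard : (B ∩ line i x).ncard = 2 :=
    (hB i x).resolve_left ((ncard_pos (toFinite _)).2 ⟨x, hxl⟩).ne'
  obtain ⟨y, ⟨hyB, hyl⟩, hyx⟩ :=
    exists_ne_of_one_lt_ncard (s := B ∩ line i x) (by omega) x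
  exact ⟨y, hyB, hyx, hyl⟩

def layer (B : Set (Fin (n + 1) → Fin k)) (v : Fin k) : Set (Fin n → Fin k) :=
  {t | Fin.cons v t ∈ B}

@[simp]
theorem mem_layer {B : Set (Fin (n + 1) → Fin k)} {v : Fin k} {t : Fin n → Fin k} :
    t ∈ layer B v ↔ Fin.cons v t ∈ B :=
  Iff.rfl

theorem image_cons_inter_line (B : Set (Fin (n + 1) → Fin k)) (v : Fin k) (i : Fin n)
    (a : Fin n → Fin k) :
    Fin.cons v '' (layer B v ∩ line i a) = B ∩ line i.succ (Fin.cons v a) := by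
  ext x
  constructor
  · rintro ⟨t, ⟨htB, htl⟩, rfl⟩
    refine ⟨htB, Fin.cases (fun _ => rfl) fun j hj => ?_⟩
    simpa using htl j (by simpa using hj)
  · rintro ⟨hxB, hxl⟩
    have hx0 : x 0 = v := hxl 0 (Fin.succ_ne_zero i).symm
    refine ⟨Fin.tail x, ⟨?_, fun j hj => hxl j.succ (by simpa using hj)⟩, ?_⟩
    · rwa [mem_layer, ← hx0, Fin.cons_self_tail]
    · rw [← hx0, Fin.cons_self_tail]

theorem IsLatinBitrade.isLatinBitrade_layer {B : Set (Fin (n + 1) → Fin k)}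
    (hB : IsLatinBitrade B) (v : Fin k) : IsLatinBitrade (layer B v) := by
  intro i a
  rw [← ncard_image_of_injective _ (Fin.cons_right_injective (α := fun _ => Fin k) v),
    image_cons_inter_line]
  exact hB i.succ (Fin.cons v a)

theorem IsLatinBitrade.exists_ne_mem_layer {B : Set (Fin (n + 1) → Fin k)}
    (hB : IsLatinBitrade B) {v : Fin k} {t : Fin n → Fin k} (ht : t ∈ layer B v) :
    ∃ w ≠ v, t ∈ layer B w := by
  obtain ⟨y, hyB, hyx, hyl⟩ := hB.exists_ne_mem_line ht 0
  have htail : Fin.tail y = t := funext fun j => hyl j.succ (Fin.succ_ne_zero j)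
  have hy : Fin.cons (y 0) t = y := by rw [← htail, Fin.cons_self_tail]
  refine ⟨y 0, fun h => hyx ?_, ?_⟩
  · rw [← hy, h]
  · rwa [mem_layer, hy]

theorem ncard_eq_sum_ncard_layer (B : Set (Fin (n + 1) → Fin k)) :
    B.ncard = ∑ v, (layer B v).ncard := by
  have hunion : B = ⋃ v : Fin k, Fin.cons (α := fun _ => Fin k) v '' layer B v := by
    ext x
    simp only [mem_iUnion, mem_image]
    exact ⟨fun hx => ⟨x 0, Fin.tail x, by rwa [mem_layer, Fin.cons_self_tail],
      Fin.cons_self_tail x⟩, by rintro ⟨v, t, ht, rfl⟩; exact ht⟩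
  have hdisj :
      Pairwise (Disjoint on fun v : Fin k => Fin.cons (α := fun _ => Fin k) v '' layer B v) := by
    intro v w hvw
    simp only [onFun, disjoint_left, mem_image, not_exists, not_and]
    rintro _ ⟨t, -, rfl⟩ s - hst
    exact hvw (Fin.cons_injective2 hst).1.symm
  rw [congrArg ncard hunion, ncard_iUnion_of_finite (fun _ => toFinite _) hdisj,
    finsum_eq_sum_of_fintype]
  simp only [ncard_image_of_injective _ (Fin.cons_right_injective _)]

theorem sum_ncard_layer_le (B : Set (Fin (n + 1) → Fin k)) (s : Finset (Fin k)) :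
    ∑ v ∈ s, (layer B v).ncard ≤ B.ncard := by
  rw [ncard_eq_sum_ncard_layer B]
  exact Finset.sum_le_sum_of_subset s.subset_univ

theorem IsLatinBitrade.exists_ne_inter_layer_nonempty {B : Set (Fin (n + 1) → Fin k)}
    (hB : IsLatinBitrade B) (hne : B.Nonempty) :
    ∃ v w, v ≠ w ∧ (layer B v ∩ layer B w).Nonempty := by
  obtain ⟨x, hx⟩ := hne
  have hx' : Fin.tail x ∈ layer B (x 0) := by rwa [mem_layer, Fin.cons_self_tail]
  obtain ⟨w, hw, hxw⟩ := hB.exists_ne_mem_layer hx'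
  exact ⟨x 0, w, hw.symm, _, hx', hxw⟩

theorem IsLatinBitrade.two_pow_le_ncard :
    ∀ {n : ℕ} {B : Set (Fin n → Fin k)}, IsLatinBitrade B → B.Nonempty → 2 ^ n ≤ B.ncard
  | 0, _, _, hne => (ncard_pos (toFinite _)).2 hne
  | n + 1, B, hB, hne => by
    obtain ⟨v, w, hvw, t, htv, htw⟩ := hB.exists_ne_inter_layer_nonempty hne
    calc 2 ^ (n + 1) = 2 ^ n + 2 ^ n := by ring
      _ ≤ (layer B v).ncard + (layer B w).ncard :=
        add_le_add ((hB.isLatinBitrade_layer v).two_pow_le_ncard ⟨t, htv⟩)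
          ((hB.isLatinBitrade_layer w).two_pow_le_ncard ⟨t, htw⟩)
      _ = ∑ u ∈ {v, w}, (layer B u).ncard := by rw [Finset.sum_pair hvw]
      _ ≤ B.ncard := sum_ncard_layer_le B _

theorem IsLatinBitrade.layer_eq_empty_of_ncard_eq {B : Set (Fin (n + 1) → Fin k)}
    (hB : IsLatinBitrade B) (hcard : B.ncard = 2 ^ (n + 1)) {u v w : Fin k} (hvw : v ≠ w)
    (hv : (layer B v).Nonempty) (hw : (layer B w).Nonempty) (huv : u ≠ v) (huw : u ≠ w) :
    layer B u = ∅ := by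
  by_contra hu
  have hsum := sum_ncard_layer_le B {u, v, w}
  rw [Finset.sum_insert (by simp [huv, huw]), Finset.sum_pair hvw, hcard, pow_succ] at hsum
  have := (hB.isLatinBitrade_layer u).two_pow_le_ncard (nonempty_iff_ne_empty.2 hu)
  have := (hB.isLatinBitrade_layer v).two_pow_le_ncard hv
  have := (hB.isLatinBitrade_layer w).two_pow_le_ncard hw
  have : 0 < 2 ^ n := by positivity
  omega

theorem IsLatinBitrade.layer_subset_layer {B : Set (Fin (n + 1) → Fin k)}
    (hB : IsLatinBitrade B) {v w : Fin k}
    (hothers : ∀ u, u ≠ v → u ≠ w → layer B u = ∅) :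
    layer B v ⊆ layer B w := by
  intro t ht
  obtain ⟨u, huv, hu⟩ := hB.exists_ne_mem_layer ht
  by_cases huw : u = w
  · exact huw ▸ hu
  · simp [hothers u huv huw] at hu

theorem eq_univ_pi_cons {B : Set (Fin (n + 1) → Fin k)} {v w : Fin k} {a b : Fin n → Fin k}
    (hv : layer B v = univ.pi fun i => {a i, b i}) (hwv : layer B w = layer B v)
    (hothers : ∀ u, u ≠ v → u ≠ w → layer B u = ∅) :
    B = univ.pi fun i => {Fin.cons v a i, Fin.cons w b i} := by
  ext x
  obtain ⟨u, t, rfl⟩ : ∃ u t, Fin.cons u t = x := ⟨x 0, Fin.tail x, Fin.cons_self_tail x⟩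
  change t ∈ layer B u ↔ _
  simp only [mem_univ_pi, Fin.forall_fin_succ, Fin.cons_zero, Fin.cons_succ]
  rw [← mem_univ_pi (t := fun i => {a i, b i}), ← hv]
  by_cases huv : u = v
  · simp [huv]
  by_cases huw : u = w
  · simp [huw, hwv]
  · simp [huv, huw, hothers u huv huw]

theorem IsLatinBitrade.exists_eq_univ_pi_of_ncard_eq :
    ∀ {n : ℕ} {B : Set (Fin n → Fin k)}, IsLatinBitrade B → B.ncard = 2 ^ n →
      ∃ a b : Fin n → Fin k, (∀ i, a i ≠ b i) ∧ B = univ.pi fun i => {a i, b i}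
  | 0, B, _, hcard => by
    refine ⟨finZeroElim, finZeroElim, finZeroElim, ?_⟩
    rw [(nonempty_of_ncard_ne_zero (s := B) (by simp [hcard])).eq_univ]
    ext x
    simp
  | n + 1, B, hB, hcard => by
    obtain ⟨v, w, hvw, t, htv, htw⟩ :=
      hB.exists_ne_inter_layer_nonempty (nonempty_of_ncard_ne_zero (by simp [hcard]))
    have hothers : ∀ u, u ≠ v → u ≠ w → layer B u = ∅ := fun u =>
      hB.layer_eq_empty_of_ncard_eq hcard hvw ⟨t, htv⟩ ⟨t, htw⟩
    have hwv : layer B w = layer B v :=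
      (hB.layer_subset_layer fun u huw huv => hothers u huv huw).antisymm
        (hB.layer_subset_layer hothers)
    have hcard_v : (layer B v).ncard = 2 ^ n := by
      have hsum : ∑ u ∈ {v, w}, (layer B u).ncard = B.ncard := by
        rw [ncard_eq_sum_ncard_layer B]
        refine Finset.sum_subset (Finset.subset_univ _) fun u _ hu => ?_
        simp only [Finset.mem_insert, Finset.mem_singleton, not_or] at hu
        simp [hothers u hu.1 hu.2]
      rw [Finset.sum_pair hvw, hwv, hcard, pow_succ] at hsum
      omega
    obtain ⟨a, b, hab, hv⟩ := (hB.isLatinBitrade_layer v).exists_eq_univ_pi_of_ncard_eq hcard_v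
    refine ⟨Fin.cons v a, Fin.cons w b, Fin.forall_fin_succ.2 ⟨by simpa, by simpa⟩, ?_⟩
    exact eq_univ_pi_cons hv hwv hothers

def cubeEmbedding (a b : Fin n → Fin k) (hab : ∀ i, a i ≠ b i) :
    hammingGraph 2 n ↪g hammingGraph k n where
  toFun := Pi.map fun i => ![a i, b i]
  inj' := Injective.piMap fun i => injective_pair_iff_ne.2 (hab i)
  map_rel_iff' {ε δ} := by
    change hammingDist (fun i => ![a i, b i] (ε i)) (fun i => ![a i, b i] (δ i)) = 1 ↔
      hammingDist ε δ = 1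
    rw [hammingDist_comp (fun i => ![a i, b i]) fun i => injective_pair_iff_ne.2 (hab i)]

theorem range_cubeEmbedding (a b : Fin n → Fin k) (hab : ∀ i, a i ≠ b i) :
    range (cubeEmbedding a b hab) = univ.pi fun i => {a i, b i} := by
  simp [cubeEmbedding, range_piMap, pair_comm]

theorem stmt_3_general (k n : ℕ) (B : Set (Fin n → Fin k))
    (hB : IsLatinBitrade B) :
    B.ncard = 2 ^ n ↔
      Nonempty (((hammingGraph k n).induce B) ≃g (hammingGraph 2 n)) := by
  constructor
  · intro hcard
    obtain ⟨a, b, hab, rfl⟩ := hB.exists_eq_univ_pi_of_ncard_eq hcard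
    rw [← range_cubeEmbedding a b hab]
    exact ⟨(cubeEmbedding a b hab).isoInduceRange.symm⟩
  · rintro ⟨φ⟩
    rw [← Nat.card_coe_set_eq, Nat.card_congr φ.toEquiv]
    simp

theorem stmt_3 (k n : ℕ) (B : Set (Fin n → Fin k))
    (hB : IsLatinBitrade B) (hne : B.Nonempty) :
    B.ncard = 2 ^ n ↔
      Nonempty (((hammingGraph k n).induce B) ≃g (hammingGraph 2 n)) :=
  stmt_3_general k n B hB
end

section
/- For every subset A ⊆ {0,1}^n ⊆ Q_3^n there exists a latin bitrade B ⊆ Q_3^n with B ∩ {0,1}^n = A; moreover, a latin bitrade in Q_3^n is uniquely determined by its intersection with {0,1}^n. -/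
open Classical in
lemma line_eq {k n : ℕ} (i : Fin n) (a : Fin n → Fin k) :
    line i a = Set.range (fun c => Function.update a i c) := by
  ext x
  constructor
  · intro h
    refine ⟨x i, funext fun j => ?_⟩
    by_cases hj : j = i
    · subst hj; simp
    · simp only []; rw [Function.update_of_ne hj]; exact (h j hj).symm
  · rintro ⟨c, rfl⟩ j hj; exact Function.update_of_ne hj _ _

open Classical in
lemma ncard_inter_line {k n : ℕ} (B : Set (Fin n → Fin k)) (i : Fin n) (a : Fin n → Fin k) :
    (B ∩ line i a).ncard
      = (Finset.univ.filter (fun c : Fin k => Function.update a i c ∈ B)).card := by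
  classical
  have hinj : Function.Injective (fun c : Fin k => Function.update a i c) := by
    intro c d h
    have := congrFun h i
    simpa using this
  rw [line_eq, ← Set.image_preimage_eq_inter_range, Set.ncard_image_of_injective _ hinj]
  have : (fun c : Fin k => Function.update a i c) ⁻¹' B
      = ↑(Finset.univ.filter (fun c : Fin k => Function.update a i c ∈ B)) := by
    ext c; simp
  rw [this, Set.ncard_coe_finset]

/-- The Boolean subcube `{0,1}^n` inside `Q_3^n`. -/
def boolCube (n : ℕ) : Set (Fin n → Fin 3) :=
  {x | ∀ j, x j = 0 ∨ x j = 1}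

open Classical in
noncomputable def extParity {n : ℕ} (A : Set (Fin n → Fin 3)) (x : Fin n → Fin 3) : ZMod 2 :=
  ((Finset.univ.filter
    (fun y : Fin n → Fin 3 => y ∈ A ∧ ∀ j, x j ≠ 2 → y j = x j)).card : ZMod 2)

open Classical in
lemma extParity_boolCube {n : ℕ} (A : Set (Fin n → Fin 3)) (hA : A ⊆ boolCube n)
    (x : Fin n → Fin 3) (hx : x ∈ boolCube n) :
    extParity A x = if x ∈ A then 1 else 0 := by
  classical
  have hx2 : ∀ j, x j ≠ 2 := by
    intro j
    rcases hx j with h | h <;> rw [h] <;> decide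
  have hfe : (Finset.univ.filter
      (fun y : Fin n → Fin 3 => y ∈ A ∧ ∀ j, x j ≠ 2 → y j = x j))
      = if x ∈ A then {x} else ∅ := by
    ext y
    simp only [Finset.mem_filter, Finset.mem_univ, true_and]
    constructor
    · rintro ⟨hyA, hy⟩
      have : y = x := funext fun j => hy j (hx2 j)
      subst this
      simp [hyA]
    · intro hy
      by_cases hxA : x ∈ A
      · simp [hxA] at hy
        subst hy
        exact ⟨hxA, fun j _ => rfl⟩
      · simp [hxA] at hy
  rw [extParity, hfe]
  by_cases hxA : x ∈ A <;> simp [hxA]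

open Classical in
lemma extParity_add {n : ℕ} (A : Set (Fin n → Fin 3)) (hA : A ⊆ boolCube n)
    (i : Fin n) (a : Fin n → Fin 3) :
    extParity A (Function.update a i 2)
      = extParity A (Function.update a i 0) + extParity A (Function.update a i 1) := by
  classical
  set P : Fin 3 → (Fin n → Fin 3) → Prop := fun c y =>
    y ∈ A ∧ ∀ j, Function.update a i c j ≠ 2 → y j = Function.update a i c j with hP
  have key : ∀ y, P 2 y ↔ (P 0 y ∧ y i = 0) ∨ (P 1 y ∧ y i = 1) := by
    intro y
    constructor
    · rintro ⟨hyA, hy⟩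
      have hcommon : ∀ c : Fin 3, ∀ j, j ≠ i → Function.update a i c j ≠ 2 →
          y j = Function.update a i c j := by
        intro c j hj h2
        rw [Function.update_of_ne hj] at h2 ⊢
        have := hy j
        rw [Function.update_of_ne hj] at this
        exact this h2
      rcases hA hyA i with h0 | h1
      · left
        refine ⟨⟨hyA, fun j h2 => ?_⟩, h0⟩
        by_cases hj : j = i
        · subst hj; simpa using h0
        · exact hcommon 0 j hj h2
      · right
        refine ⟨⟨hyA, fun j h2 => ?_⟩, h1⟩
        by_cases hj : j = i
        · subst hj; simpa using h1
        · exact hcommon 1 j hj h2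
    · rintro (⟨⟨hyA, hy⟩, hyi⟩ | ⟨⟨hyA, hy⟩, hyi⟩) <;>
      · refine ⟨hyA, fun j h2 => ?_⟩
        by_cases hj : j = i
        · subst hj; simp at h2
        · have := hy j
          rw [Function.update_of_ne hj] at this ⊢
          rw [Function.update_of_ne hj] at h2
          exact this h2
  have h0sub : ∀ y, P 0 y → y i = 0 := by
    intro y hy
    have := hy.2 i
    simpa using this
  have h1sub : ∀ y, P 1 y → y i = 1 := by
    intro y hy
    have := hy.2 i
    simpa using this
  have hsplit : (Finset.univ.filter (P 2))
      = (Finset.univ.filter (P 0)) ∪ (Finset.univ.filter (P 1)) := by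
    ext y
    simp only [Finset.mem_filter, Finset.mem_univ, true_and, Finset.mem_union]
    rw [key y]
    constructor
    · rintro (⟨h, _⟩ | ⟨h, _⟩)
      · exact Or.inl h
      · exact Or.inr h
    · rintro (h | h)
      · exact Or.inl ⟨h, h0sub y h⟩
      · exact Or.inr ⟨h, h1sub y h⟩
  have hdisj : Disjoint (Finset.univ.filter (P 0)) (Finset.univ.filter (P 1)) := by
    rw [Finset.disjoint_left]
    intro y hy0 hy1
    simp only [Finset.mem_filter, Finset.mem_univ, true_and] at hy0 hy1
    have := (h0sub y hy0).symm.trans (h1sub y hy1)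
    simp at this
  show ((Finset.univ.filter (P 2)).card : ZMod 2) = _
  rw [hsplit, Finset.card_union_of_disjoint hdisj]
  push_cast
  rfl

lemma fin3_parity (v : Fin 3 → ZMod 2) (h : v 2 = v 0 + v 1) :
    (Finset.univ.filter (fun c : Fin 3 => v c = 1)).card = 0 ∨
    (Finset.univ.filter (fun c : Fin 3 => v c = 1)).card = 2 := by
  revert h
  revert v
  decide

open Classical in
lemma exists_bitrade {n : ℕ} (A : Set (Fin n → Fin 3)) (hA : A ⊆ boolCube n) :
    ∃ B : Set (Fin n → Fin 3), IsLatinBitrade B ∧ B ∩ boolCube n = A := by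
  classical
  refine ⟨{x | extParity A x = 1}, ?_, ?_⟩
  · intro i a
    rw [ncard_inter_line]
    simp only [Set.mem_setOf_eq, Finset.filter_congr_decidable]
    have h := fin3_parity (fun c => extParity A (Function.update a i c))
      (extParity_add A hA i a)
    convert h using 4 <;> exact Subsingleton.elim _ _
  · ext x
    simp only [Set.mem_inter_iff, Set.mem_setOf_eq]
    constructor
    · rintro ⟨h1, h2⟩
      rw [extParity_boolCube A hA x h2] at h1
      by_cases hxA : x ∈ A
      · exact hxA
      · simp [hxA] at h1
    · intro hxA
      have hx2 := hA hxA
      refine ⟨?_, hx2⟩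
      rw [extParity_boolCube A hA x hx2]
      simp [hxA]

lemma fin3_bool (w : Fin 3 → Bool)
    (h : (Finset.univ.filter (fun c : Fin 3 => w c = true)).card = 0 ∨
         (Finset.univ.filter (fun c : Fin 3 => w c = true)).card = 2) :
    (w 2 = true ↔ ¬(w 0 = true ↔ w 1 = true)) := by
  revert h; revert w; decide

open Classical in
lemma bitrade_update {n : ℕ} {B : Set (Fin n → Fin 3)} (hB : IsLatinBitrade B)
    (i : Fin n) (a : Fin n → Fin 3) :
    (Function.update a i 2 ∈ B ↔
      ¬(Function.update a i 0 ∈ B ↔ Function.update a i 1 ∈ B)) := by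
  classical
  have h := hB i a
  rw [ncard_inter_line] at h
  set w : Fin 3 → Bool := fun c => decide (Function.update a i c ∈ B) with hw
  have hmem : ∀ c : Fin 3, (Function.update a i c ∈ B) ↔ (w c = true) := by
    intro c; simp [hw]
  have hcard : (Finset.univ.filter (fun c : Fin 3 => w c = true)).card = 0 ∨
      (Finset.univ.filter (fun c : Fin 3 => w c = true)).card = 2 := by
    have hfe : (Finset.univ.filter (fun c : Fin 3 => Function.update a i c ∈ B))
        = (Finset.univ.filter (fun c : Fin 3 => w c = true)) := by
      ext c; simp [hmem c]
    rwa [hfe] at h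
  have := fin3_bool w hcard
  rw [hmem 0, hmem 1, hmem 2]
  exact this

open Classical in
lemma bitrade_unique {n : ℕ} (B₁ B₂ : Set (Fin n → Fin 3))
    (h₁ : IsLatinBitrade B₁) (h₂ : IsLatinBitrade B₂)
    (h : B₁ ∩ boolCube n = B₂ ∩ boolCube n) : B₁ = B₂ := by
  classical
  have key : ∀ (k : ℕ) (x : Fin n → Fin 3),
      (Finset.univ.filter (fun j => x j = 2)).card ≤ k → (x ∈ B₁ ↔ x ∈ B₂) := by
    intro k
    induction k with
    | zero =>
      intro x hx
      have hcube : x ∈ boolCube n := by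
        intro j
        have hj : x j ≠ 2 := by
          intro hj
          have : j ∈ Finset.univ.filter (fun j => x j = 2) := by simp [hj]
          rw [Finset.card_eq_zero.mp (Nat.le_zero.mp hx)] at this
          simp at this
        omega
      constructor
      · intro hx1
        have : x ∈ B₂ ∩ boolCube n := h ▸ ⟨hx1, hcube⟩
        exact this.1
      · intro hx2
        have : x ∈ B₁ ∩ boolCube n := h.symm ▸ ⟨hx2, hcube⟩
        exact this.1
    | succ k ih =>
      intro x hx
      by_cases h2 : ∃ j, x j = 2
      · obtain ⟨j, hj⟩ := h2
        have hxu : Function.update x j 2 = x := by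
          rw [← hj]; exact Function.update_eq_self j x
        have hcard : ∀ c : Fin 3, c ≠ 2 →
            (Finset.univ.filter (fun j' => Function.update x j c j' = 2)).card ≤ k := by
          intro c hc
          have hfe : (Finset.univ.filter (fun j' => Function.update x j c j' = 2))
              = (Finset.univ.filter (fun j' => x j' = 2)).erase j := by
            ext j'
            simp only [Finset.mem_filter, Finset.mem_univ, true_and, Finset.mem_erase]
            by_cases hjj : j' = j
            · subst hjj; simp [hc]
            · rw [Function.update_of_ne hjj]; tauto
          rw [hfe]
          have hjmem : j ∈ Finset.univ.filter (fun j' => x j' = 2) := by simp [hj]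
          have := Finset.card_erase_of_mem hjmem
          omega
        have e0 := ih (Function.update x j 0) (hcard 0 (by decide))
        have e1 := ih (Function.update x j 1) (hcard 1 (by decide))
        have p1 := bitrade_update h₁ j x
        have p2 := bitrade_update h₂ j x
        rw [hxu] at p1 p2
        rw [p1, p2, e0, e1]
      · push_neg at h2
        apply ih
        have : (Finset.univ.filter (fun j => x j = 2)) = ∅ := by
          ext j; simp [h2 j]
        simp [this]
  ext x
  exact key _ x le_rfl

theorem stmt_6 (n : ℕ) :
    (∀ A : Set (Fin n → Fin 3), A ⊆ boolCube n →
      ∃ B : Set (Fin n → Fin 3), IsLatinBitrade B ∧ B ∩ boolCube n = A) ∧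
    (∀ B₁ B₂ : Set (Fin n → Fin 3), IsLatinBitrade B₁ → IsLatinBitrade B₂ →
      B₁ ∩ boolCube n = B₂ ∩ boolCube n → B₁ = B₂) := by
  exact ⟨fun A hA => exists_bitrade A hA, fun B₁ B₂ h₁ h₂ h => bitrade_unique B₁ B₂ h₁ h₂ h⟩
end

section
/- Let C be the set of all 2-element subsets of Q_4, and for each function g : Q_4^n → C let F(g) = {(a_1,…,a_n,a) ∈ Q_4^{n+1} : a ∈ g(a_1,…,a_n)}. Then F(g) is a 2-fold MDS code in Q_4^{n+1} if and only if for every c ∈ C and every 1-dimensional face F of Q_4^n, the function g takes the values c and Q_4 \ c on F the same number of times. -/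
/-- A `t`-fold MDS code: a set meeting every 1-dimensional face in exactly `t` elements. -/
def IsMDSFold {k n : ℕ} (t : ℕ) (W : Set (Fin n → Fin k)) : Prop :=
  ∀ (i : Fin n) (a : Fin n → Fin k), (W ∩ line i a).ncard = t

/-- For `g : Q_4^n → C` (where `C` is the set of 2-element subsets of `Q_4`), the set
`F(g) = {(a₁,…,aₙ,a) : a ∈ g(a₁,…,aₙ)} ⊆ Q_4^{n+1}`. -/
def Fg {n : ℕ} (g : (Fin n → Fin 4) → Finset (Fin 4)) : Set (Fin (n + 1) → Fin 4) :=
  {z | z (Fin.last n) ∈ g (fun i => z i.castSucc)}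

/-!
On a line of `Q_4^{n+1}` in one of the first `n` directions, with last coordinate `w`, the points
of `F(g)` correspond to the `t` with `w ∈ f t`, where `f` is `g` restricted to the projected line
of `Q_4^n`; lines in the last direction meet `F(g)` in `#(g x) = 2` points. So it suffices that
four 2-subsets `f t` of `Q_4` cover every point exactly twice iff every pair occurs as often as
its complement.

If pairs and complements are balanced, `c ↦ cᶜ` matches the members containing a point `v` with
those missing it, so `v` is covered by half of them. Conversely, for 2-subsets `s, c` of a 4-set,
`#(s ∩ c) - #(s ∩ cᶜ)` is `2`, `-2` or `0` according as `s = c`, `s = cᶜ` or neither; summed over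
the family, a uniform cover makes the left side vanish, so `c` and `cᶜ` occur equally often.
-/

open Finset Function

section Coverage

variable {ι α : Type*} [Fintype ι] [DecidableEq α]

theorem sum_card_inter_eq_sum_card_filter_mem (f : ι → Finset α) (s : Finset α) :
    ∑ t, #(s ∩ f t) = ∑ v ∈ s, #{t | v ∈ f t} := by
  simp_rw [← filter_mem_eq_inter, card_eq_sum_ones, sum_filter]
  exact sum_comm

theorem card_filter_mem_eq_card_filter_notMem [Fintype α] (f : ι → Finset α)
    (hf : ∀ c, #{t | f t = c} = #{t | f t = cᶜ}) (v : α) :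
    #{t | v ∈ f t} = #{t | v ∉ f t} :=
  calc #{t | v ∈ f t}
      = ∑ c with v ∈ c, #{t | f t = c} := by
        rw [sum_card_fiberwise_eq_card_filter]; simp
    _ = ∑ c with v ∈ c, #{t | f t = cᶜ} := sum_congr rfl fun c _ => hf c
    _ = ∑ c with v ∉ c, #{t | f t = c} :=
        sum_nbij' compl compl (by simp) (by simp) (by simp) (by simp) (by simp)
    _ = #{t | v ∉ f t} := by
        rw [sum_card_fiberwise_eq_card_filter]; simp

end Coverage

section Pairs

variable {ι : Type*} [Fintype ι]

theorem card_inter_add_two_mul_ite_eq {s c : Finset (Fin 4)} (hs : #s = 2) (hc : #c = 2) :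
    #(c ∩ s) + 2 * (if s = cᶜ then 1 else 0) = #(cᶜ ∩ s) + 2 * (if s = c then 1 else 0) := by
  revert s c; decide

theorem card_fiber_eq_card_fiber_compl_of_regular (f : ι → Finset (Fin 4))
    (hf : ∀ t, #(f t) = 2) {d : ℕ} (hd : ∀ v, #{t | v ∈ f t} = d) {c : Finset (Fin 4)}
    (hc : #c = 2) : #{t | f t = c} = #{t | f t = cᶜ} := by
  have key := sum_congr rfl fun t (_ : t ∈ univ) => card_inter_add_two_mul_ite_eq (hf t) hc
  simp only [sum_add_distrib, ← mul_sum, ← card_filter, sum_card_inter_eq_sum_card_filter_mem, hd,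
    sum_const, smul_eq_mul, card_compl, hc, Fintype.card_fin] at key
  omega

theorem forall_two_mul_card_filter_mem_iff (f : ι → Finset (Fin 4)) (hf : ∀ t, #(f t) = 2) :
    (∀ v, 2 * #{t | v ∈ f t} = Fintype.card ι) ↔
      ∀ c : Finset (Fin 4), #c = 2 → #{t | f t = c} = #{t | f t = cᶜ} := by
  constructor
  · intro hcov c hc
    exact card_fiber_eq_card_fiber_compl_of_regular f hf
      (d := Fintype.card ι / 2) (fun v => by have := hcov v; omega) hc
  · intro hbal v
    have hbal' (c : Finset (Fin 4)) : #{t | f t = c} = #{t | f t = cᶜ} := by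
      by_cases hc : #c = 2
      · exact hbal c hc
      · have hc' : #cᶜ ≠ 2 := by rw [card_compl, Fintype.card_fin]; omega
        rw [filter_false_of_mem fun t _ (h : f t = c) => hc (h ▸ hf t),
          filter_false_of_mem fun t _ (h : f t = cᶜ) => hc' (h ▸ hf t)]
    rw [two_mul]
    nth_rw 2 [card_filter_mem_eq_card_filter_notMem f hbal' v]
    exact card_filter_add_card_filter_not _

end Pairs

section Lines

variable {k n : ℕ}

theorem line_eq_range_update (i : Fin n) (a : Fin n → Fin k) :
    line i a = Set.range (update a i) := by
  ext x
  constructor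
  · intro hx
    exact ⟨x i, update_eq_iff.2 ⟨rfl, fun j hj => (hx j hj).symm⟩⟩
  · rintro ⟨v, rfl⟩ j hj
    exact update_of_ne hj _ _

theorem ncard_sep_line (i : Fin n) (a : Fin n → Fin k) (p : (Fin n → Fin k) → Prop)
    [DecidablePred p] : {x ∈ line i a | p x}.ncard = #{v | p (update a i v)} := by
  have : {x ∈ line i a | p x} = update a i '' {v | p (update a i v)} := by
    rw [line_eq_range_update]; aesop
  rw [this, Set.ncard_image_of_injective _ (update_injective a i), Set.ncard_eq_toFinset_card',
    Set.toFinset_ofPred]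

end Lines

section Fg

variable {n : ℕ} (g : (Fin n → Fin 4) → Finset (Fin 4))

theorem update_last_mem_Fg (a : Fin (n + 1) → Fin 4) (v : Fin 4) :
    update a (Fin.last n) v ∈ Fg g ↔ v ∈ g (Fin.init a) := by
  change update a (Fin.last n) v (Fin.last n) ∈ g (Fin.init (update a (Fin.last n) v)) ↔ _
  rw [Fin.init_update_last, update_self]

theorem update_castSucc_mem_Fg (a : Fin (n + 1) → Fin 4) (j : Fin n) (v : Fin 4) :
    update a j.castSucc v ∈ Fg g ↔ a (Fin.last n) ∈ g (update (Fin.init a) j v) := by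
  change update a j.castSucc v (Fin.last n) ∈ g (Fin.init (update a j.castSucc v)) ↔ _
  rw [Fin.init_update_castSucc, update_of_ne (Fin.castSucc_lt_last j).ne']

theorem isMDSFold_two_Fg_iff (hg : ∀ x, #(g x) = 2) :
    IsMDSFold 2 (Fg g) ↔ ∀ i a w, #{v | w ∈ g (update a i v)} = 2 := by
  classical
  have hcount (i : Fin (n + 1)) (a) : (Fg g ∩ line i a).ncard = #{v | update a i v ∈ Fg g} := by
    rw [Set.inter_comm, ← Set.sep_mem_eq, ncard_sep_line]
  simp only [IsMDSFold, hcount]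
  constructor
  · intro h i a w
    simpa [update_castSucc_mem_Fg] using h i.castSucc (Fin.snoc a w)
  · intro h i a
    cases i using Fin.lastCases with
    | last => simp [update_last_mem_Fg, hg]
    | cast j => simpa [update_castSucc_mem_Fg] using h j (Fin.init a) (a (Fin.last n))

end Fg

theorem stmt_18 (n : ℕ) (g : (Fin n → Fin 4) → Finset (Fin 4))
    (hg : ∀ x, (g x).card = 2) :
    IsMDSFold 2 (Fg g) ↔
      ∀ c : Finset (Fin 4), c.card = 2 →
        ∀ (i : Fin n) (a : Fin n → Fin 4),
          {x ∈ line i a | g x = c}.ncard = {x ∈ line i a | g x = cᶜ}.ncard := by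
  have on_line (i : Fin n) (a : Fin n → Fin 4) :
      (∀ w, #{v | w ∈ g (update a i v)} = 2) ↔
        ∀ c : Finset (Fin 4), #c = 2 →
          #{v | g (update a i v) = c} = #{v | g (update a i v) = cᶜ} := by
    rw [← forall_two_mul_card_filter_mem_iff _ fun v => hg _, Fintype.card_fin]
    exact forall_congr' fun w => by omega
  simp only [isMDSFold_two_Fg_iff g hg, on_line, ncard_sep_line]
  exact ⟨fun h c hc i a => h i a c hc, fun h i a c hc => h c hc i a⟩
end
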